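/- Let G : ℝⁿ × ℝᵏ → ℝ be a globally simple generating function, i.e. for every q ∈ ℝⁿ the partial gradient map w ↦ ∇_w G(q,w) is a diffeomorphism of ℝᵏ, and the full gradient ∇G is a diffeomorphism of ℝⁿ × ℝᵏ. Then the contour L_G is the 1-graph of a simple function: there exists a smooth function g : ℝⁿ → ℝ with ∇g a diffeomorphism of ℝⁿ such that L_G = j¹g; explicitly, g(q) = G(q, w(q)) where w(q) is the unique solution of ∇_w G(q,w) = 0, the map q ↦ w(q) is smooth, and ∇g(q) = ∇_q G(q, w(q)). Moreover, the contour of G_T(q,(v,w)) := ⟨q,v⟩ − G(v,w) is the 1-graph of the Legendre transform: L_{G_T} = j¹(gᵗ). -/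

import Mathlib

noncomputable section

/-- g : X → X is a diffeomorphism: a smooth bijection with smooth inverse. -/
def IsDiffeo {X : Type*} [NormedAddCommGroup X] [NormedSpace ℝ X] (g : X → X) : Prop :=
  ∃ e : X ≃ X, ⇑e = g ∧ ContDiff ℝ (⊤ : ℕ∞) ⇑e ∧ ContDiff ℝ (⊤ : ℕ∞) ⇑e.symm

/-- The contour L_F of a generating function F : ℝⁿ × ℝᵏ → ℝ with base variable q and
fiber variable w: L_F = {(F(q,w), q, ∇_q F(q,w)) | ∇_w F(q,w) = 0}. -/
def gfContour {n k : ℕ}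
    (F : EuclideanSpace ℝ (Fin n) × EuclideanSpace ℝ (Fin k) → ℝ) :
    Set (ℝ × EuclideanSpace ℝ (Fin n) × EuclideanSpace ℝ (Fin n)) :=
  {x | ∃ q w, gradient (fun w' => F (q, w')) w = 0 ∧
    x = (F (q, w), q, gradient (fun q' => F (q', w)) q)}

/-- The contour of a generating function F : ℝⁿ × (ℝⁿ × ℝᵏ) → ℝ with base variable q
and fiber variables (v,w). -/
def gfContour2 {n m k : ℕ}
    (F : EuclideanSpace ℝ (Fin n) × (EuclideanSpace ℝ (Fin m) × EuclideanSpace ℝ (Fin k)) → ℝ) :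
    Set (ℝ × EuclideanSpace ℝ (Fin n) × EuclideanSpace ℝ (Fin n)) :=
  {x | ∃ q v w, gradient (fun v' => F (q, (v', w))) v = 0 ∧
    gradient (fun w' => F (q, (v, w'))) w = 0 ∧
    x = (F (q, (v, w)), q, gradient (fun q' => F (q', (v, w))) q)}

/-- The 1-graph j¹f = {(f(q), q, ∇f(q)) | q ∈ ℝⁿ}. -/
def oneJetGraph {n : ℕ} (f : EuclideanSpace ℝ (Fin n) → ℝ) :
    Set (ℝ × EuclideanSpace ℝ (Fin n) × EuclideanSpace ℝ (Fin n)) :=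
  {x | ∃ q, x = (f q, q, gradient f q)}

/-! The critical point `w(q)` of the fibre `G(q, ·)` depends smoothly on `q`, by the inverse
function theorem applied to `(q, w) ↦ (q, ∇_w G(q, w))`. By the envelope theorem
`g(q) = G(q, w(q))` has `∇g(q) = ∇_q G(q, w(q))`, so the diffeomorphism `∇G` carries the graph
of `w` onto `ℝⁿ × {0}` and induces `∇g` as a diffeomorphism of `ℝⁿ`. The Legendre transform
`gᵗ(q) = ⟨q, v⟩ - g(v)` at `v = (∇g)⁻¹(q)` is again an envelope, so `∇gᵗ = (∇g)⁻¹`, and the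
critical points of `G_T` are exactly `v = (∇g)⁻¹(q)`, `w = w(v)`. -/

open Function InnerProductSpace
open scoped RealInnerProductSpace

section Gradient

variable {𝕜 F : Type*} [RCLike 𝕜] [NormedAddCommGroup F] [InnerProductSpace 𝕜 F]
  [CompleteSpace F] {f g : F → 𝕜} {f' g' x : F}

theorem HasGradientAt.sub (hf : HasGradientAt f f' x) (hg : HasGradientAt g g' x) :
    HasGradientAt (fun x => f x - g x) (f' - g') x := by
  rw [hasGradientAt_iff_hasFDerivAt, map_sub]
  exact hf.hasFDerivAt.sub hg.hasFDerivAt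

end Gradient

section RealGradient

variable {E F : Type*} [NormedAddCommGroup E] [InnerProductSpace ℝ E] [CompleteSpace E]
  [NormedAddCommGroup F] [InnerProductSpace ℝ F] [CompleteSpace F]

theorem hasGradientAt_inner_right (a x : E) : HasGradientAt (fun y => ⟪a, y⟫) a x :=
  (hasGradientAt_iff_hasFDerivAt).2 (toDual ℝ E a).hasFDerivAt

theorem hasGradientAt_inner_left (a x : E) : HasGradientAt (fun y => ⟪y, a⟫) a x := by
  simpa only [real_inner_comm a] using hasGradientAt_inner_right a x

theorem hasGradientAt_envelope {H : E × F → ℝ} {s : E → F} {q : E}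
    (hH : DifferentiableAt ℝ H (q, s q)) (hs : DifferentiableAt ℝ s q)
    (hcrit : gradient (fun w => H (q, w)) (s q) = 0) :
    HasGradientAt (fun q => H (q, s q)) (gradient (fun q' => H (q', s q)) q) q := by
  set L := fderiv ℝ H (q, s q)
  have hfib : fderiv ℝ (fun w => H (q, w)) (s q) = L.comp (.inr ℝ E F) :=
    (hH.hasFDerivAt.comp (s q) (hasFDerivAt_prodMk_right q (s q))).fderiv
  have hbase : HasFDerivAt (fun q' => H (q', s q)) (L.comp (.inl ℝ E F)) q :=
    hH.hasFDerivAt.comp q (hasFDerivAt_prodMk_left q (s q))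
  have hL0 : ∀ u, L (0, u) = 0 := fun u => by
    simpa [hcrit, ← toDual_gradient, hfib] using (DFunLike.congr_fun hfib u).symm
  rw [hasGradientAt_iff_hasFDerivAt, toDual_gradient, hbase.fderiv]
  refine (hH.hasFDerivAt.comp q ((hasFDerivAt_id q).prodMk hs.hasFDerivAt)).congr_fderiv ?_
  ext v
  have hsplit : (v, fderiv ℝ s q v) = (v, 0) + (0, fderiv ℝ s q v) := by simp
  simp only [ContinuousLinearMap.comp_apply, ContinuousLinearMap.prod_apply,
    ContinuousLinearMap.coe_id', id_eq, ContinuousLinearMap.inl_apply]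
  rw [hsplit, map_add, hL0, add_zero]

theorem hasGradientAt_legendre {g : E → ℝ} (ψ : E ≃ E) (hg : ∀ v, HasGradientAt g (ψ v) v)
    (hψ : Differentiable ℝ ψ.symm) (q : E) :
    HasGradientAt (fun q => ⟪q, ψ.symm q⟫ - g (ψ.symm q)) (ψ.symm q) q := by
  have hH : Differentiable ℝ fun x : E × E => ⟪x.1, x.2⟫ - g x.2 := fun x =>
    (differentiableAt_fst.inner ℝ differentiableAt_snd).sub
      ((hg x.2).differentiableAt.comp x differentiableAt_snd)
  have hcrit : gradient (fun v => ⟪q, v⟫ - g v) (ψ.symm q) = 0 := by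
    rw [((hasGradientAt_inner_right q _).sub (hg _)).gradient, ψ.apply_symm_apply, sub_self]
  have := hasGradientAt_envelope (hH _) (hψ q) hcrit
  dsimp only at this
  rwa [((hasGradientAt_inner_left _ q).sub (hasGradientAt_const _ _)).gradient, sub_zero] at this

end RealGradient

section Diffeo

variable {X : Type*} [NormedAddCommGroup X] [NormedSpace ℝ X]

theorem IsDiffeo.injective_fderiv {f : X → X} (hf : IsDiffeo f) (x : X) :
    Injective (fderiv ℝ f x) := by
  obtain ⟨e, rfl, he, hes⟩ := hf
  have hcomp : (fderiv ℝ e.symm (e x)).comp (fderiv ℝ e x) = .id ℝ X := by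
    rw [← fderiv_comp x (hes.differentiable (by simp) _) (he.differentiable (by simp) x),
      e.symm_comp_self, fderiv_id]
  exact LeftInverse.injective (g := fderiv ℝ e.symm (e x)) (DFunLike.congr_fun hcomp)

theorem Equiv.contDiff_symm_of_injective_fderiv [FiniteDimensional ℝ X] {n : WithTop ℕ∞}
    (e : X ≃ X) (he : ContDiff ℝ n e) (hn : n ≠ 0) (hinj : ∀ x, Injective (fderiv ℝ e x)) :
    ContDiff ℝ n e.symm := by
  let e' : X → X ≃L[ℝ] X := fun x =>
    (LinearEquiv.ofInjectiveEndo (fderiv ℝ e x : X →ₗ[ℝ] X) (hinj x)).toContinuousLinearEquiv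
  have he' : ∀ x, HasFDerivAt e (e' x : X →L[ℝ] X) x := fun x =>
    (he.differentiable hn x).hasFDerivAt
  have hopen : IsOpenMap e :=
    isOpenMap_of_hasStrictFDerivAt_equiv fun x => he.contDiffAt.hasStrictFDerivAt' (he' x) hn
  exact (e.toHomeomorphOfContinuousOpen he.continuous hopen).contDiff_symm he' he

end Diffeo

section ZeroSection

variable {E F : Type*} [NormedAddCommGroup E] [NormedSpace ℝ E] [FiniteDimensional ℝ E]
  [NormedAddCommGroup F] [NormedSpace ℝ F] [FiniteDimensional ℝ F]

theorem exists_contDiff_zero_of_isDiffeo_slice {f : E × F → F} (hf : ContDiff ℝ (⊤ : ℕ∞) f)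
    (hslice : ∀ q, IsDiffeo fun w => f (q, w)) :
    ∃ s : E → F, ContDiff ℝ (⊤ : ℕ∞) s ∧ ∀ q w, f (q, w) = 0 ↔ w = s q := by
  have hfd : Differentiable ℝ f := hf.differentiable (by simp)
  have hinj : ∀ x, Injective (fderiv ℝ (fun x : E × F => (x.1, f x)) x) := by
    intro x
    have hDslice : fderiv ℝ (fun w => f (x.1, w)) x.2 = (fderiv ℝ f x).comp (.inr ℝ E F) :=
      ((hfd x).hasFDerivAt.comp x.2 (hasFDerivAt_prodMk_right x.1 x.2)).fderiv
    rw [(hasFDerivAt_fst.prodMk (hfd x).hasFDerivAt).fderiv, injective_iff_map_eq_zero]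
    rintro ⟨u, v⟩ huv
    obtain ⟨rfl, hv⟩ : u = 0 ∧ fderiv ℝ f x (u, v) = 0 := by simpa using huv
    have : v = 0 := (injective_iff_map_eq_zero _).1 ((hslice x.1).injective_fderiv x.2) v
      (by simpa [hDslice] using hv)
    rw [this, Prod.mk_zero_zero]
  choose e he _ _ using hslice
  have hfe : ∀ x, f x = e x.1 x.2 := fun x => (congrFun (he x.1) x.2).symm
  let β : E × F ≃ E × F :=
    { toFun := fun x => (x.1, f x)
      invFun := fun y => (y.1, (e y.1).symm y.2)
      left_inv := fun x => by simp [hfe]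
      right_inv := fun y => by simp [hfe] }
  have hβs := β.contDiff_symm_of_injective_fderiv (contDiff_fst.prodMk hf) (by simp) hinj
  refine ⟨fun q => (β.symm (q, 0)).2,
    contDiff_snd.comp (hβs.comp (contDiff_id.prodMk contDiff_const)), fun q w => ?_⟩
  change f (q, w) = 0 ↔ w = (e q).symm 0
  rw [Equiv.eq_symm_apply, hfe]

end ZeroSection

/-- `Φ` restricted to `graph s = Φ⁻¹(γ × {0})`, read in the coordinates `α` and `γ`. -/
def Equiv.restrictGraph {α β γ δ : Type*} [Zero δ] (Φ : α × β ≃ γ × δ) (s : α → β)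
    (hs : ∀ a b, (Φ (a, b)).2 = 0 ↔ b = s a) : α ≃ γ where
  toFun a := (Φ (a, s a)).1
  invFun c := (Φ.symm (c, 0)).1
  left_inv a := by
    have : Φ (a, s a) = ((Φ (a, s a)).1, 0) := Prod.ext rfl ((hs a _).2 rfl)
    simp [← this]
  right_inv c := by
    set x := Φ.symm (c, 0)
    have hx : Φ x = (c, 0) := Φ.apply_symm_apply _
    have hgraph : x = (x.1, s x.1) := Prod.ext rfl ((hs x.1 x.2).1 (by simp [hx]))
    change (Φ (x.1, s x.1)).1 = c
    rw [← hgraph, hx]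

section Contour

variable {n k : ℕ} {G : EuclideanSpace ℝ (Fin n) × EuclideanSpace ℝ (Fin k) → ℝ}
  {s : EuclideanSpace ℝ (Fin n) → EuclideanSpace ℝ (Fin k)}

theorem gfContour_eq_oneJetGraph (hG : Differentiable ℝ G) (hs : Differentiable ℝ s)
    (hcrit : ∀ q w, gradient (fun w' => G (q, w')) w = 0 ↔ w = s q) :
    gfContour G = oneJetGraph fun q => G (q, s q) := by
  have hgrad : ∀ q, gradient (fun q => G (q, s q)) q = gradient (fun q' => G (q', s q)) q :=
    fun q => (hasGradientAt_envelope (hG _) (hs q) ((hcrit q _).2 rfl)).gradient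
  ext x
  simp [gfContour, oneJetGraph, hcrit, hgrad]

theorem gfContour2_eq_oneJetGraph_legendre (hG : Differentiable ℝ G) (hs : Differentiable ℝ s)
    (hcrit : ∀ q w, gradient (fun w' => G (q, w')) w = 0 ↔ w = s q)
    (ψ : EuclideanSpace ℝ (Fin n) ≃ EuclideanSpace ℝ (Fin n))
    (hψ : ∀ q, ψ q = gradient (fun q' => G (q', s q)) q) (hψs : Differentiable ℝ ψ.symm) :
    gfContour2 (fun x => ⟪x.1, x.2.1⟫ - G (x.2.1, x.2.2))
      = oneJetGraph fun q => ⟪q, ψ.symm q⟫ - G (ψ.symm q, s (ψ.symm q)) := by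
  have hGq : ∀ v w, HasGradientAt (fun v' => G (v', w)) (gradient (fun v' => G (v', w)) v) v :=
    fun v w => ((hG _).comp v (differentiableAt_id.prodMk (differentiableAt_const w))).hasGradientAt
  have hGw : ∀ v w, HasGradientAt (fun w' => G (v, w')) (gradient (fun w' => G (v, w')) w) w :=
    fun v w => ((hG _).comp w ((differentiableAt_const v).prodMk differentiableAt_id)).hasGradientAt
  have hgv : ∀ q v w, gradient (fun v' => ⟪q, v'⟫ - G (v', w)) v
      = q - gradient (fun v' => G (v', w)) v :=
    fun q v w => ((hasGradientAt_inner_right q v).sub (hGq v w)).gradient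
  have hgw : ∀ q v w, gradient (fun w' => ⟪q, v⟫ - G (v, w')) w
      = -gradient (fun w' => G (v, w')) w := fun q v w => by
    rw [((hasGradientAt_const _ _).sub (hGw v w)).gradient, zero_sub]
  have hgq : ∀ q v w, gradient (fun q' => ⟪q', v⟫ - G (v, w)) q = v := fun q v w => by
    rw [((hasGradientAt_inner_left v q).sub (hasGradientAt_const _ _)).gradient, sub_zero]
  have hL : ∀ q, gradient (fun q => ⟪q, ψ.symm q⟫ - G (ψ.symm q, s (ψ.symm q))) q = ψ.symm q :=
    fun q => (hasGradientAt_legendre ψ (fun v => hψ v ▸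
      hasGradientAt_envelope (hG _) (hs v) ((hcrit v _).2 rfl)) hψs q).gradient
  have hcrit2 : ∀ q v w, (q - gradient (fun v' => G (v', w)) v = 0 ∧
      -gradient (fun w' => G (v, w')) w = 0) ↔ v = ψ.symm q ∧ w = s v := fun q v w => by
    rw [neg_eq_zero, hcrit, sub_eq_zero, and_comm]
    constructor
    · rintro ⟨rfl, hq⟩
      rw [hq, ← hψ, ψ.symm_apply_apply]
      exact ⟨rfl, rfl⟩
    · rintro ⟨rfl, rfl⟩
      rw [← hψ, ψ.apply_symm_apply]
      exact ⟨rfl, rfl⟩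
  ext x
  simp only [gfContour2, oneJetGraph, Set.mem_ofPred_eq, hgv, hgw, hgq, hL, ← and_assoc, hcrit2]
  simp

end Contour

/-- Let G : ℝⁿ × ℝᵏ → ℝ be a globally simple generating function: smooth, for every q
the map w ↦ ∇_w G(q,w) is a diffeomorphism of ℝᵏ, and the full gradient
∇G = (∇_q G, ∇_w G) is a diffeomorphism of ℝⁿ × ℝᵏ.  Then L_G is the 1-graph of a
simple function g: there are a smooth map q ↦ w(q) selecting the unique critical point
of G(q,·), a smooth g with g(q) = G(q,w(q)), ∇g(q) = ∇_q G(q,w(q)), ∇g the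
diffeomorphism ψ, and L_G = j¹g.  Moreover the contour of G_T(q,(v,w)) = ⟨q,v⟩ − G(v,w)
is the 1-graph of the Legendre transform gᵗ(q) = ⟨q,(∇g)⁻¹(q)⟩ − g((∇g)⁻¹(q)):
L_{G_T} = j¹(gᵗ). -/
theorem stmt18 (n k : ℕ)
    (G : EuclideanSpace ℝ (Fin n) × EuclideanSpace ℝ (Fin k) → ℝ)
    (hG : ContDiff ℝ (⊤ : ℕ∞) G)
    (hfib : ∀ q, IsDiffeo (fun w => gradient (fun w' => G (q, w')) w))
    (hfull : IsDiffeo (fun x : EuclideanSpace ℝ (Fin n) × EuclideanSpace ℝ (Fin k) =>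
      (gradient (fun q' => G (q', x.2)) x.1, gradient (fun w' => G (x.1, w')) x.2))) :
    ∃ (g : EuclideanSpace ℝ (Fin n) → ℝ)
      (wmap : EuclideanSpace ℝ (Fin n) → EuclideanSpace ℝ (Fin k))
      (ψ : EuclideanSpace ℝ (Fin n) ≃ EuclideanSpace ℝ (Fin n)),
      ContDiff ℝ (⊤ : ℕ∞) wmap ∧
      (∀ q, gradient (fun w' => G (q, w')) (wmap q) = 0) ∧
      (∀ q w, gradient (fun w' => G (q, w')) w = 0 → w = wmap q) ∧
      (∀ q, g q = G (q, wmap q)) ∧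
      ContDiff ℝ (⊤ : ℕ∞) g ∧
      (∀ q, gradient g q = gradient (fun q' => G (q', wmap q)) q) ∧
      ⇑ψ = gradient g ∧
      ContDiff ℝ (⊤ : ℕ∞) ⇑ψ ∧ ContDiff ℝ (⊤ : ℕ∞) ⇑ψ.symm ∧
      gfContour G = oneJetGraph g ∧
      gfContour2 (fun x => (inner ℝ x.1 x.2.1 : ℝ) - G (x.2.1, x.2.2))
        = oneJetGraph (fun q => (inner ℝ q (ψ.symm q) : ℝ) - g (ψ.symm q)) := by
  obtain ⟨Φ, hΦ, hΦc, hΦsc⟩ := hfull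
  have hGd : Differentiable ℝ G := hG.differentiable (by simp)
  obtain ⟨s, hsc, hcrit⟩ := exists_contDiff_zero_of_isDiffeo_slice
    (f := fun x => gradient (fun w' => G (x.1, w')) x.2)
    (by rw [hΦ] at hΦc; exact hΦc.snd) hfib
  have hsd : Differentiable ℝ s := hsc.differentiable (by simp)
  have hgrad : ∀ q, HasGradientAt (fun q => G (q, s q)) (gradient (fun q' => G (q', s q)) q) q :=
    fun q => hasGradientAt_envelope (hGd _) (hsd q) ((hcrit q _).2 rfl)
  let ψ := Φ.restrictGraph s (by simpa [hΦ] using hcrit)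
  have hψ : ∀ q, ψ q = gradient (fun q' => G (q', s q)) q := fun q => by
    simp [ψ, Equiv.restrictGraph, hΦ]
  have hψsc : ContDiff ℝ (⊤ : ℕ∞) ψ.symm :=
    contDiff_fst.comp (hΦsc.comp (contDiff_id.prodMk contDiff_const))
  refine ⟨fun q => G (q, s q), s, ψ, hsc, fun q => (hcrit q _).2 rfl, fun q w => (hcrit q w).1,
    fun _ => rfl, hG.comp (contDiff_id.prodMk hsc), fun q => (hgrad q).gradient,
    funext fun q => (hψ q).trans (hgrad q).gradient.symm,
    contDiff_fst.comp (hΦc.comp (contDiff_id.prodMk hsc)), hψsc,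
    gfContour_eq_oneJetGraph hGd hsd hcrit,
    gfContour2_eq_oneJetGraph_legendre hGd hsd hcrit ψ hψ (hψsc.differentiable (by simp))⟩
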